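/- arXiv:1910.11431 — 2 statements merged into one kernel-verified Lean document; each statement's English description precedes it below -/
import Mathlib

section
/- If p, q, g are continuous real-valued functions on an open interval I containing t₀, and y₀, y₀' are real numbers, then there exists a unique twice-differentiable function φ on I satisfying φ'' + p·φ' + q·φ = g on I with φ(t₀) = y₀ and φ'(t₀) = y₀'. -/
/-!
Writing `x = (y, y')`, the equation becomes the first-order system
`x' = (x.2, g - p x.2 - q x.1)`, which is affine in `x` with coefficients bounded on every
compact subinterval of `I`. On a compact interval on which the field is `K`-Lipschitz, the `n`-th
iterate of the Picard operator is `(K (b - a))ⁿ / n!`-Lipschitz, hence a contraction for large `n`;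
so the solution exists on the whole interval and not just for short times. Solutions on compact
subintervals agree on overlaps by Grönwall uniqueness, so they glue to a solution on `I`, and
uniqueness for the second-order problem is uniqueness for the system.
-/

open Set Function Filter Topology MeasureTheory NNReal

variable {E : Type*} [NormedAddCommGroup E] [NormedSpace ℝ E] {v : ℝ → E → E}

lemma continuous_picard (hv : Continuous (uncurry v)) {γ : ℝ → E} (hγ : Continuous γ)
    (t₀ : ℝ) (x₀ : E) : Continuous (ODE.picard v t₀ x₀ γ) :=
  continuous_const.add <| intervalIntegral.continuous_primitive
    (fun _ _ ↦ (hv.comp (continuous_id.prodMk hγ)).intervalIntegrable _ _) t₀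

lemma norm_intervalIntegral_le_of_norm_le_mul_abs_sub_pow {f : ℝ → E} {C t₀ t : ℝ} {n : ℕ}
    (hC : 0 ≤ C) (hf : ∀ τ, ‖f τ‖ ≤ C * |τ - t₀| ^ n) :
    ‖∫ τ in t₀..t, f τ‖ ≤ C * |t - t₀| ^ (n + 1) / (n + 1) := by
  calc ‖∫ τ in t₀..t, f τ‖ ≤ |∫ τ in t₀..t, C * |τ - t₀| ^ n| :=
        intervalIntegral.norm_integral_le_abs_of_norm_le (ae_of_all _ hf)
          (Continuous.intervalIntegrable (by fun_prop) _ _)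
    _ = C * |t - t₀| ^ (n + 1) / (n + 1) := by
        rw [intervalIntegral.abs_intervalIntegral_eq, integral_const_mul,
          integral_pow_abs_sub_uIoc, abs_of_nonneg (by positivity), mul_div_assoc]

section Picard

open scoped Nat

variable {a b : ℝ}

noncomputable def picardOp (hv : Continuous (uncurry v)) (t₀ : Icc a b) (x₀ : E)
    (f : C(Icc a b, E)) : C(Icc a b, E) where
  toFun t := ODE.picard v t₀ x₀ (IccExtend (t₀.2.1.trans t₀.2.2) f) t
  continuous_toFun := (continuous_picard hv (f.continuous.Icc_extend') _ _).comp
    continuous_subtype_val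

variable {hv : Continuous (uncurry v)} {t₀ : Icc a b} {x₀ : E}

lemma picardOp_apply (f : C(Icc a b, E)) (t : Icc a b) :
    picardOp hv t₀ x₀ f t = x₀ + ∫ τ in (t₀ : ℝ)..t, v τ (IccExtend (t₀.2.1.trans t₀.2.2) f τ) :=
  rfl

lemma dist_iterate_picardOp_apply_le {K : ℝ≥0} (hK : ∀ t, LipschitzWith K (v t))
    (f g : C(Icc a b, E)) (n : ℕ) (t : Icc a b) :
    dist ((picardOp hv t₀ x₀)^[n] f t) ((picardOp hv t₀ x₀)^[n] g t) ≤
      (K * |(t : ℝ) - t₀|) ^ n / n ! * dist f g := by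
  induction n generalizing t with
  | zero => simpa using ContinuousMap.dist_apply_le_dist t
  | succ n ih =>
    set F := (picardOp hv t₀ x₀)^[n] f
    set G := (picardOp hv t₀ x₀)^[n] g
    have hab : a ≤ b := t₀.2.1.trans t₀.2.2
    have hint (H : C(Icc a b, E)) :
        IntervalIntegrable (fun τ ↦ v τ (IccExtend hab H τ)) volume t₀ t :=
      (hv.comp (continuous_id.prodMk H.continuous.Icc_extend')).intervalIntegrable _ _
    -- `projIcc` is 1-Lipschitz and fixes `t₀`, so the inductive bound at `projIcc τ` holds at `τ`
    have hbound : ∀ τ : ℝ, ‖v τ (IccExtend hab F τ) - v τ (IccExtend hab G τ)‖ ≤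
        (K ^ (n + 1) / n ! * dist f g) * |τ - t₀| ^ n := by
      intro τ
      have hproj : |(projIcc a b hab τ : ℝ) - t₀| ≤ |τ - t₀| := by
        simpa only [projIcc_val] using abs_projIcc_sub_projIcc hab (c := τ) (d := t₀)
      calc ‖v τ (IccExtend hab F τ) - v τ (IccExtend hab G τ)‖
          ≤ K * dist (F (projIcc a b hab τ)) (G (projIcc a b hab τ)) := by
            rw [← dist_eq_norm]; exact (hK τ).dist_le_mul _ _
        _ ≤ K * ((K * |τ - t₀|) ^ n / n ! * dist f g) := by
            gcongr
            refine (ih _).trans ?_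
            gcongr
        _ = (K ^ (n + 1) / n ! * dist f g) * |τ - t₀| ^ n := by ring
    rw [iterate_succ_apply', iterate_succ_apply', dist_eq_norm, picardOp_apply, picardOp_apply,
      add_sub_add_left_eq_sub, ← intervalIntegral.integral_sub (hint F) (hint G)]
    refine (norm_intervalIntegral_le_of_norm_le_mul_abs_sub_pow (by positivity) hbound).trans_eq ?_
    rw [Nat.factorial_succ]
    push_cast
    field_simp
    ring

lemma dist_iterate_picardOp_le {K : ℝ≥0} (hK : ∀ t, LipschitzWith K (v t))
    (f g : C(Icc a b, E)) (n : ℕ) :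
    dist ((picardOp hv t₀ x₀)^[n] f) ((picardOp hv t₀ x₀)^[n] g) ≤
      (K * (b - a)) ^ n / n ! * dist f g := by
  have hba : 0 ≤ b - a := sub_nonneg.2 (t₀.2.1.trans t₀.2.2)
  refine (ContinuousMap.dist_le (by positivity)).2 fun t ↦
    (dist_iterate_picardOp_apply_le hK f g n t).trans ?_
  have := Real.dist_le_of_mem_Icc t.2 t₀.2
  rw [Real.dist_eq] at this
  gcongr

lemma exists_isFixedPt_picardOp [CompleteSpace E] {K : ℝ≥0} (hK : ∀ t, LipschitzWith K (v t)) :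
    ∃ f, IsFixedPt (picardOp hv t₀ x₀) f := by
  obtain ⟨n, hn⟩ := (FloorSemiring.tendsto_pow_div_factorial_atTop (K * (b - a))).eventually
    (gt_mem_nhds zero_lt_one) |>.exists
  have hC : 0 ≤ (K * (b - a)) ^ n / n ! := by
    have := sub_nonneg.2 (t₀.2.1.trans t₀.2.2)
    positivity
  have hcontr : ContractingWith ⟨_, hC⟩ (picardOp hv t₀ x₀)^[n] :=
    ⟨hn, LipschitzWith.of_dist_le_mul (dist_iterate_picardOp_le hK · · n)⟩
  exact ⟨_, hcontr.isFixedPt_fixedPoint_iterate⟩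

end Picard

theorem exists_forall_mem_Icc_hasDerivWithinAt_of_lipschitzWith [CompleteSpace E] {a b : ℝ}
    {K : ℝ≥0} (hv : Continuous (uncurry v)) (hK : ∀ t, LipschitzWith K (v t))
    (t₀ : Icc a b) (x₀ : E) :
    ∃ γ : ℝ → E, γ t₀ = x₀ ∧ ∀ t ∈ Icc a b, HasDerivWithinAt γ (v t (γ t)) (Icc a b) t := by
  have hab : a ≤ b := t₀.2.1.trans t₀.2.2
  obtain ⟨f, hf⟩ := exists_isFixedPt_picardOp (hv := hv) (t₀ := t₀) (x₀ := x₀) hK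
  set γ := IccExtend hab f
  have hγ : ∀ t ∈ Icc a b, γ t = ODE.picard v t₀ x₀ γ t := fun t ht ↦ by
    rw [show γ t = f ⟨t, ht⟩ from IccExtend_of_mem hab f ht, ← hf]
    rfl
  refine ⟨γ, by rw [hγ t₀ t₀.2, ODE.picard_apply₀], fun t ht ↦ ?_⟩
  exact (ODE.hasDerivWithinAt_picard_Icc t₀.2 hv.continuousOn
    f.continuous.Icc_extend'.continuousOn (fun _ _ ↦ mem_univ _) x₀ ht).congr_of_mem hγ ht

theorem exists_forall_mem_Icc_hasDerivWithinAt_of_continuousOn [CompleteSpace E] {a b : ℝ}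
    {K : ℝ≥0} (hv : ContinuousOn (uncurry v) (Icc a b ×ˢ univ))
    (hK : ∀ t ∈ Icc a b, LipschitzWith K (v t)) (t₀ : Icc a b) (x₀ : E) :
    ∃ γ : ℝ → E, γ t₀ = x₀ ∧ ∀ t ∈ Icc a b, HasDerivWithinAt γ (v t (γ t)) (Icc a b) t := by
  have hab : a ≤ b := t₀.2.1.trans t₀.2.2
  -- freeze the vector field outside `[a, b]` to make it globally continuous and Lipschitz
  set w : ℝ → E → E := fun t ↦ v (projIcc a b hab t)
  have hw : Continuous (uncurry w) :=
    hv.comp_continuous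
      ((continuous_subtype_val.comp (continuous_projIcc (h := hab))).prodMap continuous_id)
      fun z ↦ ⟨(projIcc a b hab z.1).2, mem_univ _⟩
  obtain ⟨γ, hγ₀, hγ⟩ := exists_forall_mem_Icc_hasDerivWithinAt_of_lipschitzWith hw
    (fun t ↦ hK _ (projIcc a b hab t).2) t₀ x₀
  refine ⟨γ, hγ₀, fun t ht ↦ ?_⟩
  simpa [w, projIcc_of_mem hab ht] using hγ t ht

def UniformlyLipschitzOnCompacts {X : Type*} [PseudoEMetricSpace X] (v : ℝ → X → X)
    (I : Set ℝ) : Prop :=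
  ∀ k ⊆ I, IsCompact k → ∃ K : ℝ≥0, ∀ t ∈ k, LipschitzWith K (v t)

lemma UniformlyLipschitzOnCompacts.mono {X : Type*} [PseudoEMetricSpace X] {v : ℝ → X → X}
    {I J : Set ℝ} (hv : UniformlyLipschitzOnCompacts v I) (hJI : J ⊆ I) :
    UniformlyLipschitzOnCompacts v J :=
  fun k hk ↦ hv k (hk.trans hJI)

lemma exists_Icc_subset_Ioo_of_mem_of_mem {α β s t : ℝ} (hs : s ∈ Ioo α β) (ht : t ∈ Ioo α β) :
    ∃ a b, Icc a b ⊆ Ioo α β ∧ s ∈ Ioo a b ∧ t ∈ Ioo a b := by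
  obtain ⟨a, hαa, ha⟩ := exists_between (lt_min hs.1 ht.1)
  obtain ⟨b, hb, hbβ⟩ := exists_between (max_lt hs.2 ht.2)
  refine ⟨a, b, Icc_subset_Ioo hαa hbβ, ⟨?_, ?_⟩, ⟨?_, ?_⟩⟩ <;>
    first | exact ha.trans_le (by simp) | exact (by simp : _ ≤ _).trans_lt hb

theorem ODE_solution_unique_of_uniformlyLipschitzOnCompacts {α β t₀ : ℝ} {f g : ℝ → E}
    (hv : UniformlyLipschitzOnCompacts v (Ioo α β)) (ht₀ : t₀ ∈ Ioo α β)
    (hf : ∀ t ∈ Ioo α β, HasDerivAt f (v t (f t)) t)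
    (hg : ∀ t ∈ Ioo α β, HasDerivAt g (v t (g t)) t) (heq : f t₀ = g t₀) :
    EqOn f g (Ioo α β) := by
  intro s hs
  obtain ⟨a, b, hsub, hsab, ht₀ab⟩ := exists_Icc_subset_Ioo_of_mem_of_mem hs ht₀
  obtain ⟨K, hK⟩ := hv _ hsub isCompact_Icc
  have hsub' : Ioo a b ⊆ Ioo α β := Ioo_subset_Icc_self.trans hsub
  exact ODE_solution_unique_of_mem_Ioo (s := fun _ ↦ univ)
    (fun t ht ↦ (hK t (Ioo_subset_Icc_self ht)).lipschitzOnWith) ht₀ab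
    (fun t ht ↦ ⟨hf t (hsub' ht), mem_univ _⟩) (fun t ht ↦ ⟨hg t (hsub' ht), mem_univ _⟩)
    heq hsab

theorem exists_forall_mem_Ioo_hasDerivAt [CompleteSpace E] {α β t₀ : ℝ}
    (hcont : ContinuousOn (uncurry v) (Ioo α β ×ˢ univ))
    (hv : UniformlyLipschitzOnCompacts v (Ioo α β)) (ht₀ : t₀ ∈ Ioo α β) (x₀ : E) :
    ∃ γ : ℝ → E, γ t₀ = x₀ ∧ ∀ t ∈ Ioo α β, HasDerivAt γ (v t (γ t)) t := by
  have hloc : ∀ s ∈ Ioo α β, ∃ a b, ∃ γ : ℝ → E, Icc a b ⊆ Ioo α β ∧ s ∈ Ioo a b ∧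
      t₀ ∈ Ioo a b ∧ γ t₀ = x₀ ∧ ∀ t ∈ Ioo a b, HasDerivAt γ (v t (γ t)) t := by
    intro s hs
    obtain ⟨a, b, hsub, hsab, ht₀ab⟩ := exists_Icc_subset_Ioo_of_mem_of_mem hs ht₀
    obtain ⟨K, hK⟩ := hv _ hsub isCompact_Icc
    obtain ⟨γ, hγ₀, hγ⟩ := exists_forall_mem_Icc_hasDerivWithinAt_of_continuousOn
      (hcont.mono (prod_mono hsub subset_rfl)) hK ⟨t₀, Ioo_subset_Icc_self ht₀ab⟩ x₀
    exact ⟨a, b, γ, hsub, hsab, ht₀ab, hγ₀, fun t ht ↦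
      (hγ t (Ioo_subset_Icc_self ht)).hasDerivAt (Icc_mem_nhds ht.1 ht.2)⟩
  choose! a b γ hsub hs hat₀ hγ₀ hγ using hloc
  -- glue the local solutions by evaluating the one attached to each point at that point
  refine ⟨fun s ↦ γ s s, hγ₀ t₀ ht₀, fun t ht ↦ ?_⟩
  have hglue : (fun s ↦ γ s s) =ᶠ[𝓝 t] γ t := by
    filter_upwards [Ioo_mem_nhds (hs t ht).1 (hs t ht).2] with s hst
    have hsI : s ∈ Ioo α β := hsub t ht (Ioo_subset_Icc_self hst)
    have hmem {r : ℝ} :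
        r ∈ Ioo (a s ⊔ a t) (b s ⊓ b t) ↔ r ∈ Ioo (a s) (b s) ∧ r ∈ Ioo (a t) (b t) := by
      rw [← Ioo_inter_Ioo, mem_inter_iff]
    have hJ : Ioo (a s ⊔ a t) (b s ⊓ b t) ⊆ Ioo α β :=
      fun r hr ↦ hsub s hsI (Ioo_subset_Icc_self (hmem.1 hr).1)
    exact ODE_solution_unique_of_uniformlyLipschitzOnCompacts (hv.mono hJ)
      (hmem.2 ⟨hat₀ s hsI, hat₀ t ht⟩) (fun r hr ↦ hγ s hsI r (hmem.1 hr).1)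
      (fun r hr ↦ hγ t ht r (hmem.1 hr).2) ((hγ₀ s hsI).trans (hγ₀ t ht).symm)
      (hmem.2 ⟨hs s hsI, hst⟩)
  exact (hγ t ht t (hs t ht)).congr_of_eventuallyEq hglue

section LinearSecondOrder

def linearSecondOrderField (p q g : ℝ → ℝ) (t : ℝ) (x : ℝ × ℝ) : ℝ × ℝ :=
  (x.2, g t - p t * x.2 - q t * x.1)

variable {p q g : ℝ → ℝ} {I : Set ℝ}

lemma lipschitzWith_linearSecondOrderField (t : ℝ) :
    LipschitzWith (1 + ‖p t‖₊ + ‖q t‖₊) (linearSecondOrderField p q g t) := by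
  have h := LipschitzWith.prod_snd.prodMk (((LipschitzWith.const (g t)).sub
    ((lipschitzWith_smul (p t)).comp LipschitzWith.prod_snd)).sub
    ((lipschitzWith_smul (q t)).comp LipschitzWith.prod_fst))
  refine h.weaken ?_
  simp only [zero_add, mul_one, max_le_iff]
  constructor
  · exact le_add_right (le_add_right le_rfl)
  · rw [add_assoc]; exact le_add_self

lemma uniformlyLipschitzOnCompacts_linearSecondOrderField (hp : ContinuousOn p I)
    (hq : ContinuousOn q I) : UniformlyLipschitzOnCompacts (linearSecondOrderField p q g) I := by
  intro k hkI hk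
  obtain ⟨C, hC⟩ := hk.bddAbove_image ((hp.mono hkI).nnnorm.add (hq.mono hkI).nnnorm)
  refine ⟨1 + C, fun t ht ↦ (lipschitzWith_linearSecondOrderField t).weaken ?_⟩
  rw [add_assoc]
  exact add_le_add_right (hC ⟨t, ht, rfl⟩) 1

lemma continuousOn_uncurry_linearSecondOrderField (hp : ContinuousOn p I) (hq : ContinuousOn q I)
    (hg : ContinuousOn g I) :
    ContinuousOn (uncurry (linearSecondOrderField p q g)) (I ×ˢ univ) := by
  have hI : MapsTo Prod.fst (I ×ˢ (univ : Set (ℝ × ℝ))) I := fun z hz ↦ hz.1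
  have hcomp {f : ℝ → ℝ} (hf : ContinuousOn f I) :
      ContinuousOn (fun z : ℝ × ℝ × ℝ ↦ f z.1) (I ×ˢ univ) :=
    hf.comp continuousOn_fst hI
  exact continuous_snd.snd.continuousOn.prodMk (((hcomp hg).sub ((hcomp hp).mul
    continuous_snd.snd.continuousOn)).sub ((hcomp hq).mul continuous_snd.fst.continuousOn))

lemma hasDerivAt_linearSecondOrderField {ψ : ℝ → ℝ} {t : ℝ} (h₁ : HasDerivAt ψ (deriv ψ t) t)
    (h₂ : HasDerivAt (deriv ψ) (deriv (deriv ψ) t) t)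
    (heq : deriv (deriv ψ) t + p t * deriv ψ t + q t * ψ t = g t) :
    HasDerivAt (fun s ↦ (ψ s, deriv ψ s))
      (linearSecondOrderField p q g t (ψ t, deriv ψ t)) t := by
  refine (h₁.prodMk h₂).congr_deriv ?_
  simp only [linearSecondOrderField, Prod.mk.injEq, true_and]
  linarith

end LinearSecondOrder

/-- Existence and uniqueness for the second-order linear ODE
`y'' + p·y' + q·y = g` on an open interval `I = (α, β)` containing `t₀`,
with prescribed initial value and derivative at `t₀`. Uniqueness is
uniqueness on `I`. -/
theorem stmt_0 (α β t₀ : ℝ) (ht₀ : t₀ ∈ Set.Ioo α β)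
    (p q g : ℝ → ℝ)
    (hp : ContinuousOn p (Set.Ioo α β))
    (hq : ContinuousOn q (Set.Ioo α β))
    (hg : ContinuousOn g (Set.Ioo α β))
    (y₀ y₀' : ℝ) :
    ∃ φ : ℝ → ℝ,
      ((∀ t ∈ Set.Ioo α β, HasDerivAt φ (deriv φ t) t) ∧
       (∀ t ∈ Set.Ioo α β, HasDerivAt (deriv φ) (deriv (deriv φ) t) t) ∧
       (∀ t ∈ Set.Ioo α β,
          deriv (deriv φ) t + p t * deriv φ t + q t * φ t = g t) ∧
       φ t₀ = y₀ ∧ deriv φ t₀ = y₀') ∧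
      ∀ ψ : ℝ → ℝ,
        ((∀ t ∈ Set.Ioo α β, HasDerivAt ψ (deriv ψ t) t) ∧
         (∀ t ∈ Set.Ioo α β, HasDerivAt (deriv ψ) (deriv (deriv ψ) t) t) ∧
         (∀ t ∈ Set.Ioo α β,
            deriv (deriv ψ) t + p t * deriv ψ t + q t * ψ t = g t) ∧
         ψ t₀ = y₀ ∧ deriv ψ t₀ = y₀') →
        Set.EqOn φ ψ (Set.Ioo α β) := by
  have hlip := uniformlyLipschitzOnCompacts_linearSecondOrderField (g := g) hp hq
  obtain ⟨Φ, hΦ₀, hΦ⟩ := exists_forall_mem_Ioo_hasDerivAt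
    (continuousOn_uncurry_linearSecondOrderField hp hq hg) hlip ht₀ (y₀, y₀')
  have hφ' : ∀ t ∈ Ioo α β, HasDerivAt (fun s ↦ (Φ s).1) (Φ t).2 t :=
    fun t ht ↦ (ContinuousLinearMap.fst ℝ ℝ ℝ).hasFDerivAt.comp_hasDerivAt t (hΦ t ht)
  have hφ'_eq : EqOn (deriv fun s ↦ (Φ s).1) (fun s ↦ (Φ s).2) (Ioo α β) :=
    fun t ht ↦ (hφ' t ht).deriv
  have hφ'' : ∀ t ∈ Ioo α β,
      HasDerivAt (deriv fun s ↦ (Φ s).1) (g t - p t * (Φ t).2 - q t * (Φ t).1) t :=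
    fun t ht ↦ ((ContinuousLinearMap.snd ℝ ℝ ℝ).hasFDerivAt.comp_hasDerivAt t
      (hΦ t ht)).congr_of_eventuallyEq (hφ'_eq.eventuallyEq_of_mem (isOpen_Ioo.mem_nhds ht))
  refine ⟨fun s ↦ (Φ s).1, ⟨fun t ht ↦ ?_, fun t ht ↦ ?_, fun t ht ↦ ?_, by simp [hΦ₀],
    by simp [hφ'_eq ht₀, hΦ₀]⟩, ?_⟩
  · rw [hφ'_eq ht]; exact hφ' t ht
  · rw [(hφ'' t ht).deriv]; exact hφ'' t ht
  · rw [(hφ'' t ht).deriv, hφ'_eq ht]; ring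
  rintro ψ ⟨hψ', hψ'', hψ, hψ₀, hψ₀'⟩
  have hΨ : ∀ t ∈ Ioo α β, HasDerivAt (fun s ↦ (ψ s, deriv ψ s))
      (linearSecondOrderField p q g t (ψ t, deriv ψ t)) t :=
    fun t ht ↦ hasDerivAt_linearSecondOrderField (hψ' t ht) (hψ'' t ht) (hψ t ht)
  exact fun t ht ↦ congrArg Prod.fst <| ODE_solution_unique_of_uniformlyLipschitzOnCompacts
    hlip ht₀ hΦ hΨ (by rw [hΦ₀, hψ₀, hψ₀']) ht
end

section
/- Let k ∈ ℝ, k ≠ 0, and let a, b ∈ ℂ satisfy a*·b - a·b* = 2ik (where * denotes complex conjugation). If φ ∈ ℂ satisfies Re(e^{iη}·a) = (k²/(k²+1))^{1/4} and Re(e^{iη}·φ) = 0 for some real η with e^{iη} = i·φ*/|φ| and φ ≠ 0, and additionally b = φ + (2/π)a, then |φ| = (k²(k²+1))^{1/4}. -/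
open Complex ComplexConjugate

/-!
Writing `b = φ + t a` with `t = 2/π` real, the Wronskian is unchanged when `b` is replaced by `φ`,
so `Im (a* φ) = k`. The choice `e^{iη} = i φ*/|φ|` turns `Re (e^{iη} a)` into `Im (a* φ) / |φ|`,
hence `|φ| · (k²/(k²+1))^{1/4} = k`, and raising to the fourth power gives `|φ|⁴ = k²(k²+1)`.
-/

lemma conj_mul_sub_mul_conj (a z : ℂ) :
    conj a * z - a * conj z = 2 * I * (conj a * z).im := by
  have h := sub_conj (conj a * z)
  simp only [map_mul, conj_conj] at h
  rw [h]
  push_cast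
  ring

lemma wronskian_add_ofReal_mul (a φ : ℂ) (t : ℝ) :
    conj a * (φ + t * a) - a * conj (φ + t * a) = conj a * φ - a * conj φ := by
  simp only [map_add, map_mul, conj_ofReal]
  ring

lemma re_I_mul_conj_div_norm_mul (a φ : ℂ) :
    (I * conj φ / (‖φ‖ : ℂ) * a).re = (conj a * φ).im / ‖φ‖ := by
  rw [div_mul_eq_mul_div, div_ofReal_re]
  simp only [mul_re, mul_im, I_re, I_im, conj_re, conj_im]
  ring

lemma eq_rpow_of_mul_rpow_eq {r k : ℝ} (hr : 0 ≤ r) (hk : k ≠ 0)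
    (h : r * (k ^ 2 / (k ^ 2 + 1)) ^ ((1 : ℝ) / 4) = k) :
    r = (k ^ 2 * (k ^ 2 + 1)) ^ ((1 : ℝ) / 4) := by
  have hq : ((k ^ 2 / (k ^ 2 + 1)) ^ ((1 : ℝ) / 4)) ^ 4 = k ^ 2 / (k ^ 2 + 1) := by
    rw [← Real.rpow_natCast, ← Real.rpow_mul (by positivity)]
    norm_num
  have h4 : r ^ 4 * (k ^ 2 / (k ^ 2 + 1)) = k ^ 4 := by
    rw [← hq, ← mul_pow, h]
  have hr4 : r ^ 4 = k ^ 2 * (k ^ 2 + 1) := by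
    have hk2 : k ^ 2 ≠ 0 := pow_ne_zero 2 hk
    field_simp at h4
    linear_combination h4
  rw [← hr4, one_div]
  exact_mod_cast (Real.pow_rpow_inv_natCast hr four_ne_zero).symm

theorem stmt_6_general (k : ℝ) (hk : k ≠ 0) (a b φ : ℂ) (η : ℝ)
    (hW : starRingEnd ℂ a * b - a * starRingEnd ℂ b = 2 * Complex.I * k)
    (hφ : φ ≠ 0)
    (hη : Complex.exp (Complex.I * η)
        = Complex.I * starRingEnd ℂ φ / (‖φ‖ : ℂ))
    (hre1 : (Complex.exp (Complex.I * η) * a).re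
        = (k ^ 2 / (k ^ 2 + 1)) ^ ((1 : ℝ) / 4))
    (hb : b = φ + (2 / Real.pi) * a) :
    ‖φ‖ = (k ^ 2 * (k ^ 2 + 1)) ^ ((1 : ℝ) / 4) := by
  have hW' : conj a * φ - a * conj φ = 2 * I * k := by
    rw [← hW, hb, ← wronskian_add_ofReal_mul a φ (2 / Real.pi)]
    push_cast
    rfl
  have him : (conj a * φ).im = k := by
    rw [conj_mul_sub_mul_conj] at hW'
    exact_mod_cast mul_left_cancel₀ (by simp) hW'
  rw [hη, re_I_mul_conj_div_norm_mul, him] at hre1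
  refine eq_rpow_of_mul_rpow_eq (norm_nonneg φ) hk ?_
  rw [← hre1, mul_div_cancel₀ _ (norm_ne_zero_iff.mpr hφ)]

/-- The key algebraic step determining `|φ|` in the even-case
Gel'fand–Levitan phase-shift computation. -/
theorem stmt_6 (k : ℝ) (hk : k ≠ 0) (a b φ : ℂ) (η : ℝ)
    (hW : starRingEnd ℂ a * b - a * starRingEnd ℂ b = 2 * Complex.I * k)
    (hφ : φ ≠ 0)
    (hη : Complex.exp (Complex.I * η)
        = Complex.I * starRingEnd ℂ φ / (‖φ‖ : ℂ))
    (hre1 : (Complex.exp (Complex.I * η) * a).re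
        = (k ^ 2 / (k ^ 2 + 1)) ^ ((1 : ℝ) / 4))
    (hre2 : (Complex.exp (Complex.I * η) * φ).re = 0)
    (hb : b = φ + (2 / Real.pi) * a) :
    ‖φ‖ = (k ^ 2 * (k ^ 2 + 1)) ^ ((1 : ℝ) / 4) :=
  stmt_6_general k hk a b φ η hW hφ hη hre1 hb
end
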